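/- arXiv:math/0312418 — 3 statements merged into one kernel-verified Lean document; each statement's English description precedes it below -/
import Mathlib

section
/- For m ≥ 1, the number of non-squashing partitions of 2m+1 into distinct parts equals b(0) + b(1) + ... + b(m), and the number of non-squashing partitions of 2m into distinct parts equals b(0) + b(1) + ... + b(m) - 1. -/
/-!
Removing the largest part `q` of a non-squashing partition of `n` into distinct parts leaves such
a partition of `r = n - q` with all parts below `q`, and the non-squashing condition at the last
part says exactly `r ≤ q`, i.e. `r ≤ n / 2`; conversely every such partition of `r ≤ n / 2`
extends by the part `n - r`. When `2 r < n` the bound on the parts is automatic, and for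
`n = 2 m`, `r = m` it excludes only the partition `[m]`.
-/

/-- A partition written as a nondecreasing list of positive parts. -/
def IsPartList (l : List ℕ) : Prop :=
  l.Pairwise (· ≤ ·) ∧ ∀ p ∈ l, 0 < p

/-- A partition with distinct parts, written as a strictly increasing list of positive parts. -/
def DistinctPartList (l : List ℕ) : Prop :=
  l.Pairwise (· < ·) ∧ ∀ p ∈ l, 0 < p

/-- The s-non-squashing condition: (s-1)(p₁+⋯+p_j) ≤ p_{j+1} for 1 ≤ j ≤ k-1. -/
def NSq (s : ℕ) (l : List ℕ) : Prop :=
  ∀ j, 0 < j → j < l.length → (s - 1) * (l.take j).sum ≤ l.getD j 0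

/-- Number of non-squashing partitions of n into distinct parts. -/
noncomputable def b (n : ℕ) : ℕ :=
  {l : List ℕ | DistinctPartList l ∧ NSq 2 l ∧ l.sum = n}.ncard

theorem distinctPartList_append_singleton {l : List ℕ} {q : ℕ} :
    DistinctPartList (l ++ [q]) ↔ DistinctPartList l ∧ (∀ p ∈ l, p < q) ∧ 0 < q := by
  simp only [DistinctPartList, List.pairwise_append, List.pairwise_singleton, List.mem_singleton,
    forall_eq, true_and, List.forall_mem_append]
  tauto

theorem nsq_append_singleton {s q : ℕ} {l : List ℕ} :
    NSq s (l ++ [q]) ↔ NSq s l ∧ (s - 1) * l.sum ≤ q := by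
  have hlast : (0 < l.length → (s - 1) * l.sum ≤ q) ↔ (s - 1) * l.sum ≤ q := by
    rcases eq_or_ne l [] with rfl | hl
    · simp
    · simp [List.length_pos_iff, hl]
  simp only [NSq, List.length_append, List.length_singleton, Nat.lt_succ_iff_lt_or_eq, or_imp,
    imp_and, forall_and, Imp.swap (a := 0 < _), forall_eq]
  rw [← hlast]
  refine and_congr (forall₃_congr fun j hj _ => ?_) (imp_congr_right fun _ => ?_)
  · rw [List.take_append_of_le_length hj.le, List.getD_append _ _ _ _ hj]
  · rw [List.take_append_of_le_length le_rfl, List.take_length,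
      List.getD_append_right _ _ _ _ le_rfl, Nat.sub_self]
    rfl

theorem finite_setOf_pairwise_lt_of_le (n : ℕ) :
    {l : List ℕ | l.Pairwise (· < ·) ∧ ∀ p ∈ l, p ≤ n}.Finite := by
  refine (List.range (n + 1)).sublists.finite_toSet.subset fun l ⟨hl, hle⟩ => ?_
  have hsub : l ⊆ List.range (n + 1) := fun p hp =>
    List.mem_range.2 (Nat.lt_succ_of_le (hle p hp))
  exact List.mem_sublists.2 <| List.sublist_of_subperm_of_pairwise
    (List.subperm_of_subset hl.nodup hsub) hl List.pairwise_lt_range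

theorem eq_singleton_of_mem_of_sum_eq {l : List ℕ} {p : ℕ} (hpos : ∀ x ∈ l, 0 < x)
    (hp : p ∈ l) (hsum : l.sum = p) : l = [p] := by
  obtain ⟨l₁, l₂, rfl⟩ := List.mem_iff_append.1 hp
  have hzero : ∀ x ∈ l₁ ++ l₂, x = 0 := by
    rw [← List.sum_eq_zero_iff]
    simp only [List.sum_append, List.sum_cons] at hsum ⊢
    omega
  have hnil : l₁ ++ l₂ = [] := List.eq_nil_iff_forall_not_mem.2 fun x hx =>
    (hpos x (by simp at hx ⊢; tauto)).ne' (hzero x hx)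
  simp_all

namespace NonSquashing

def partitions (n : ℕ) : Set (List ℕ) := {l | DistinctPartList l ∧ NSq 2 l ∧ l.sum = n}

def partitionsLT (r q : ℕ) : Set (List ℕ) := {l ∈ partitions r | ∀ p ∈ l, p < q}

theorem b_eq_ncard (n : ℕ) : b n = (partitions n).ncard := rfl

theorem le_of_mem_partitions {n p : ℕ} {l : List ℕ} (hl : l ∈ partitions n) (hp : p ∈ l) :
    p ≤ n :=
  hl.2.2 ▸ List.le_sum_of_mem hp

theorem partitions_finite (n : ℕ) : (partitions n).Finite :=
  (finite_setOf_pairwise_lt_of_le n).subset fun _ hl =>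
    ⟨hl.1.1, fun _ => le_of_mem_partitions hl⟩

theorem singleton_mem_partitions {r : ℕ} (hr : 0 < r) : [r] ∈ partitions r := by
  refine ⟨⟨List.pairwise_singleton _ r, by simpa using hr⟩, ?_, by simp⟩
  intro j hj hjl
  simp at hjl
  omega

theorem append_singleton_mem_partitions_iff {l : List ℕ} {q n : ℕ} :
    l ++ [q] ∈ partitions n ↔
      l ∈ partitionsLT l.sum q ∧ 0 < q ∧ l.sum ≤ q ∧ l.sum + q = n := by
  simp only [partitionsLT, partitions, Set.mem_ofPred_eq, distinctPartList_append_singleton,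
    nsq_append_singleton, List.sum_append, List.sum_singleton, Nat.add_one_sub_one, one_mul]
  tauto

theorem partitions_eq_biUnion {n : ℕ} (hn : 0 < n) :
    partitions n =
      ⋃ r ∈ Finset.range (n / 2 + 1), (· ++ [n - r]) '' partitionsLT r (n - r) := by
  ext l
  simp only [Set.mem_iUnion, Finset.mem_range, exists_prop, Set.mem_image]
  constructor
  · intro hl
    rcases List.eq_nil_or_concat l with rfl | ⟨l', q, rfl⟩
    · exact absurd hl.2.2 hn.ne
    rw [List.concat_eq_append, append_singleton_mem_partitions_iff] at hl
    obtain ⟨hl', -, hle, rfl⟩ := hl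
    refine ⟨l'.sum, by omega, l', ?_⟩
    rw [Nat.add_sub_cancel_left]
    exact ⟨hl', List.concat_eq_append.symm⟩
  · rintro ⟨r, hr, l', hl', rfl⟩
    have hsum : l'.sum = r := hl'.1.2.2
    refine append_singleton_mem_partitions_iff.2 ⟨hsum ▸ hl', ?_, ?_, ?_⟩ <;> omega

theorem ncard_partitions_eq_sum {n : ℕ} (hn : 0 < n) :
    (partitions n).ncard = ∑ r ∈ Finset.range (n / 2 + 1), (partitionsLT r (n - r)).ncard := by
  have hdisj : (↑(Finset.range (n / 2 + 1)) : Set ℕ).PairwiseDisjoint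
      fun r => (· ++ [n - r]) '' partitionsLT r (n - r) := by
    rintro i - j - hij
    refine Set.disjoint_left.2 ?_
    rintro _ ⟨l₁, h₁, rfl⟩ ⟨l₂, h₂, heq⟩
    obtain rfl : l₂ = l₁ := (List.append_inj' heq rfl).1
    exact hij (h₁.1.2.2.symm.trans h₂.1.2.2)
  rw [partitions_eq_biUnion hn, ← Finset.set_biUnion_coe,
    Set.Finite.ncard_biUnion (Finset.finite_toSet _)
      (fun r _ => ((partitions_finite r).subset fun _ hl => hl.1).image _) hdisj,
    finsum_mem_coe_finset]
  exact Finset.sum_congr rfl fun r _ => (List.append_left_injective _).injOn.ncard_image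

theorem partitionsLT_of_lt {r q : ℕ} (h : r < q) : partitionsLT r q = partitions r :=
  Set.sep_eq_self_iff_mem_true.2 fun _ hl _ hp => (le_of_mem_partitions hl hp).trans_lt h

theorem partitionsLT_self {r : ℕ} : partitionsLT r r = partitions r \ {[r]} := by
  ext l
  simp only [partitionsLT, Set.mem_sdiff, Set.mem_singleton_iff, Set.mem_ofPred_eq]
  refine and_congr_right fun hl => ⟨?_, fun hne p hp => ?_⟩
  · rintro hlt rfl
    exact (hlt r (List.mem_singleton_self r)).false
  · refine (le_of_mem_partitions hl hp).lt_of_ne fun hpr => hne ?_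
    exact eq_singleton_of_mem_of_sum_eq hl.1.2 (hpr ▸ hp) hl.2.2

end NonSquashing

open NonSquashing in
theorem stmt_5 (m : ℕ) (hm : 1 ≤ m) :
    b (2 * m + 1) = ∑ i ∈ Finset.range (m + 1), b i ∧
    b (2 * m) = (∑ i ∈ Finset.range (m + 1), b i) - 1 := by
  have hlower : ∀ {n r}, 2 * r < n → (partitionsLT r (n - r)).ncard = b r := fun h => by
    rw [partitionsLT_of_lt (by omega), b_eq_ncard]
  have hbm : 0 < b m := (Set.ncard_pos (partitions_finite m)).2
    ⟨[m], singleton_mem_partitions hm⟩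
  constructor
  · rw [b_eq_ncard, ncard_partitions_eq_sum (by omega), show (2 * m + 1) / 2 = m by omega]
    exact Finset.sum_congr rfl fun r hr => hlower (by have := Finset.mem_range.1 hr; omega)
  · rw [b_eq_ncard, ncard_partitions_eq_sum (by omega), show 2 * m / 2 = m by omega,
      Finset.sum_range_succ, Finset.sum_range_succ,
      Finset.sum_congr rfl fun r hr => hlower (by have := Finset.mem_range.1 hr; omega),
      show 2 * m - m = m by omega, partitionsLT_self,
      Set.ncard_sdiff_singleton_of_mem (singleton_mem_partitions hm), ← b_eq_ncard]
    exact (Nat.add_sub_assoc hbm _).symm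
end

section
/- For m > 0, b(16m) ≡ b(8m) (mod 2), b(32m+8) is even, and b(32m+24) is odd, where b(n) is the number of non-squashing partitions of n into distinct parts. -/
/-!
Increasing the largest part by one maps the partitions of `n > 0` injectively into those of
`n + 1`. For `n + 1 = 2k + 1` the only partition missed is `[k, k + 1]`; for `n + 1 = 2k + 2` the
missed ones are those whose largest part `k + 1` equals the sum of the others, i.e. a partition
of `k + 1` other than `[k + 1]` with `k + 1` appended. Hence `b(2k+1) = b(2k) + 1` and
`b(2k+2) + 1 = b(2k+1) + b(k+1)`, which telescope to `b(2k) + 1 = S(k) := b(0) + ⋯ + b(k)`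
for `k ≥ 1`. Modulo 2 this gives `S(2k+1) ≡ k` and `S(2k) ≡ k + S(k)`, so
`b(8j) ≡ j + S(j) + 1`, and the three congruences follow.
-/

lemma List.modifyLast_injective {α : Type*} {f : α → α} (hf : Function.Injective f) :
    Function.Injective (List.modifyLast f) := by
  have hnil : List.modifyLast f [] = [] := rfl
  intro l₁ l₂ h
  rcases l₁.eq_nil_or_concat' with rfl | ⟨a, x, rfl⟩ <;>
    rcases l₂.eq_nil_or_concat' with rfl | ⟨c, y, rfl⟩ <;>
    simp only [hnil, List.modifyLast_concat] at h
  · rfl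
  · simp at h
  · simp at h
  · obtain ⟨rfl, hxy⟩ := List.append_inj' h rfl
    rw [hf (List.singleton_injective hxy)]

lemma List.lt_of_mem_of_sum_le {l : List ℕ} {p x : ℕ} (hpos : ∀ y ∈ l, 0 < y)
    (hsum : l.sum ≤ p) (hne : l ≠ [p]) (hx : x ∈ l) : x < p := by
  obtain ⟨a, c, rfl⟩ := List.append_of_mem hx
  have hnil : ∀ t : List ℕ, t.sum = 0 → (∀ y ∈ t, 0 < y) → t = [] := fun t h0 ht =>
    by_contra fun hne => (List.sum_pos t ht hne).ne' h0
  simp only [List.sum_append, List.sum_cons] at hsum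
  refine lt_of_le_of_ne (by omega) fun hxp => hne ?_
  rw [hnil a (by omega) fun y hy => hpos y (by simp [hy]),
    hnil c (by omega) fun y hy => hpos y (by simp [hy]), hxp]
  rfl

lemma distinctPartList_concat {l : List ℕ} {p : ℕ} :
    DistinctPartList (l ++ [p]) ↔ DistinctPartList l ∧ (∀ x ∈ l, x < p) ∧ 0 < p := by
  simp only [DistinctPartList, List.pairwise_append, List.pairwise_singleton, List.mem_append,
    List.mem_singleton, true_and, forall_eq, or_imp, forall_and]
  tauto

lemma nsq_concat (s : ℕ) {l : List ℕ} {p : ℕ} :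
    NSq s (l ++ [p]) ↔ NSq s l ∧ (s - 1) * l.sum ≤ p := by
  have last : (l ++ [p]).getD l.length 0 = p := by simp
  have init : ∀ j < l.length, (s - 1) * ((l ++ [p]).take j).sum ≤ (l ++ [p]).getD j 0 ↔
      (s - 1) * (l.take j).sum ≤ l.getD j 0 := fun j hj => by
    rw [List.take_append_of_le_length hj.le, List.getD_append _ _ _ _ hj]
  constructor
  · intro h
    refine ⟨fun j hj hjl => (init j hjl).1 (h j hj (by simp; omega)), ?_⟩
    rcases Nat.eq_zero_or_pos l.length with h0 | h0
    · simp [List.eq_nil_of_length_eq_zero h0]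
    · simpa [last] using h l.length h0 (by simp)
  · rintro ⟨hl, hp⟩ j hj hjl
    rcases (show j < l.length ∨ j = l.length by simp at hjl; omega) with h | rfl
    · exact (init j h).2 (hl j hj h)
    · simpa [last] using hp

def distinctNonSquashing (n : ℕ) : Set (List ℕ) :=
  {l | DistinctPartList l ∧ NSq 2 l ∧ l.sum = n}

lemma b_eq_ncard (n : ℕ) : b n = (distinctNonSquashing n).ncard := rfl

lemma distinctNonSquashing_finite (n : ℕ) : (distinctNonSquashing n).Finite := by
  refine ((Finset.range (n + 1)).powerset.image (Finset.sort · (· ≤ ·))).finite_toSet.subset ?_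
  rintro l ⟨⟨hl, -⟩, -, rfl⟩
  refine Finset.mem_coe.2 <|
    Finset.mem_image.2 ⟨l.toFinset, Finset.mem_powerset.2 fun x hx => ?_, ?_⟩
  · exact Finset.mem_range.2 (Nat.lt_succ_of_le (List.le_sum_of_mem (List.mem_toFinset.1 hx)))
  · exact (List.toFinset_sort _ hl.nodup).2 (hl.imp le_of_lt)

lemma concat_mem_distinctNonSquashing {l : List ℕ} {p n : ℕ} :
    l ++ [p] ∈ distinctNonSquashing n ↔ l ∈ distinctNonSquashing l.sum ∧
      (∀ x ∈ l, x < p) ∧ 0 < p ∧ l.sum ≤ p ∧ l.sum + p = n := by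
  simp only [distinctNonSquashing, Set.mem_ofPred_eq, distinctPartList_concat, nsq_concat,
    List.sum_append, List.sum_singleton, Nat.add_one_sub_one, one_mul]
  tauto

lemma exists_eq_concat_of_mem_distinctNonSquashing {l : List ℕ} {n : ℕ} (hn : 0 < n)
    (hl : l ∈ distinctNonSquashing n) : ∃ l' p, l = l' ++ [p] :=
  l.eq_nil_or_concat'.resolve_left fun h => by simp [h, distinctNonSquashing] at hl; omega

lemma nil_mem_distinctNonSquashing : [] ∈ distinctNonSquashing 0 :=
  ⟨⟨by simp, by simp⟩, fun _ _ h => by simp at h, rfl⟩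

lemma singleton_mem_distinctNonSquashing {p : ℕ} (hp : 0 < p) : [p] ∈ distinctNonSquashing p :=
  concat_mem_distinctNonSquashing (l := []).2
    ⟨nil_mem_distinctNonSquashing, by simp, hp, by simp, by simp⟩

lemma concat_succ_mem_distinctNonSquashing {l : List ℕ} {p n : ℕ}
    (hl : l ++ [p] ∈ distinctNonSquashing n) : l ++ [p + 1] ∈ distinctNonSquashing (n + 1) := by
  obtain ⟨hinit, hlt, -, hle, rfl⟩ := concat_mem_distinctNonSquashing.1 hl
  exact concat_mem_distinctNonSquashing.2
    ⟨hinit, fun x hx => (hlt x hx).trans p.lt_succ_self, p.succ_pos, hle.trans p.le_succ, rfl⟩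

lemma modifyLast_mem_distinctNonSquashing {l : List ℕ} {n : ℕ} (hn : 0 < n)
    (hl : l ∈ distinctNonSquashing n) :
    l.modifyLast (· + 1) ∈ distinctNonSquashing (n + 1) := by
  obtain ⟨l', p, rfl⟩ := exists_eq_concat_of_mem_distinctNonSquashing hn hl
  rw [List.modifyLast_concat]
  exact concat_succ_mem_distinctNonSquashing hl

lemma concat_mem_distinctNonSquashing_of_succ {l : List ℕ} {p n : ℕ} (hn : 0 < n)
    (hl : l ++ [p + 1] ∈ distinctNonSquashing (n + 1)) (hle : l.sum ≤ p) (hne : l ≠ [p]) :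
    l ++ [p] ∈ distinctNonSquashing n := by
  obtain ⟨hinit, -, -, -, hsum⟩ := concat_mem_distinctNonSquashing.1 hl
  exact concat_mem_distinctNonSquashing.2
    ⟨hinit, fun x => List.lt_of_mem_of_sum_le hinit.1.2 hle hne, by omega, hle, by omega⟩

lemma distinctNonSquashing_two_mul_add_one {k : ℕ} (hk : 0 < k) :
    distinctNonSquashing (2 * k + 1) =
      insert [k, k + 1] (List.modifyLast (· + 1) '' distinctNonSquashing (2 * k)) := by
  ext l
  constructor
  · intro hl
    obtain ⟨l', p, rfl⟩ := exists_eq_concat_of_mem_distinctNonSquashing (by omega) hl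
    obtain ⟨-, -, -, hle, hsum⟩ := concat_mem_distinctNonSquashing.1 hl
    obtain ⟨q, rfl⟩ : ∃ q, p = q + 1 := ⟨p - 1, by omega⟩
    by_cases hne : l' = [q]
    · subst hne
      left
      simp only [List.sum_singleton] at hsum
      simp [show q = k by omega]
    · right
      exact ⟨l' ++ [q], concat_mem_distinctNonSquashing_of_succ (by omega) hl (by omega) hne,
        List.modifyLast_concat _ _ _⟩
  · rintro (rfl | ⟨l', hl', rfl⟩)
    · exact concat_mem_distinctNonSquashing (l := [k]).2 ⟨singleton_mem_distinctNonSquashing hk,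
        by simp, k.succ_pos, by simp, by simp; omega⟩
    · exact modifyLast_mem_distinctNonSquashing (by omega) hl'

lemma distinctNonSquashing_two_mul_add_two (k : ℕ) :
    distinctNonSquashing (2 * k + 2) =
      List.modifyLast (· + 1) '' distinctNonSquashing (2 * k + 1) ∪
        (· ++ [k + 1]) '' (distinctNonSquashing (k + 1) \ {[k + 1]}) := by
  ext l
  constructor
  · intro hl
    obtain ⟨l', p, rfl⟩ := exists_eq_concat_of_mem_distinctNonSquashing (by omega) hl
    obtain ⟨hinit, hlt, -, hle, hsum⟩ := concat_mem_distinctNonSquashing.1 hl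
    rcases hle.eq_or_lt with heq | hlt'
    · obtain rfl : p = k + 1 := by omega
      refine Or.inr ⟨l', ⟨by rwa [← heq], fun h => ?_⟩, rfl⟩
      exact (hlt _ (by simp [Set.mem_singleton_iff.1 h])).false
    · obtain ⟨q, rfl⟩ : ∃ q, p = q + 1 := ⟨p - 1, by omega⟩
      have hne : l' ≠ [q] := by rintro rfl; simp at hsum; omega
      exact Or.inl ⟨l' ++ [q],
        concat_mem_distinctNonSquashing_of_succ (by omega) hl (by omega) hne,
        List.modifyLast_concat _ _ _⟩
  · rintro (⟨l', hl', rfl⟩ | ⟨l', ⟨hl', hne⟩, rfl⟩)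
    · exact modifyLast_mem_distinctNonSquashing (by omega) hl'
    · have hsum : l'.sum = k + 1 := hl'.2.2
      exact concat_mem_distinctNonSquashing.2 ⟨by rwa [hsum], fun x =>
        List.lt_of_mem_of_sum_le hl'.1.2 hsum.le hne, k.succ_pos, hsum.le, by omega⟩

lemma disjoint_modifyLast_image_concat_image (k : ℕ) :
    Disjoint (List.modifyLast (· + 1) '' distinctNonSquashing (2 * k + 1))
      ((· ++ [k + 1]) '' (distinctNonSquashing (k + 1) \ {[k + 1]})) := by
  rw [Set.disjoint_left]
  rintro _ ⟨l, hl, rfl⟩ ⟨l', ⟨⟨-, -, hsum⟩, -⟩, heq⟩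
  obtain ⟨l, p, rfl⟩ := exists_eq_concat_of_mem_distinctNonSquashing (by omega) hl
  obtain ⟨-, -, -, hle, -⟩ := concat_mem_distinctNonSquashing.1 hl
  rw [List.modifyLast_concat] at heq
  obtain ⟨rfl, hp⟩ := List.append_inj' heq rfl
  simp at hp
  omega

lemma b_zero : b 0 = 1 := by
  rw [b_eq_ncard, Set.ncard_eq_one]
  refine ⟨[], Set.eq_singleton_iff_unique_mem.2 ⟨nil_mem_distinctNonSquashing,
    fun l ⟨⟨_, hpos⟩, _, hsum⟩ =>
      by_contra fun hne => (List.sum_pos l hpos hne).ne' hsum⟩⟩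

lemma b_one : b 1 = 1 := by
  rw [b_eq_ncard, Set.ncard_eq_one]
  refine ⟨[1], Set.eq_singleton_iff_unique_mem.2 ⟨singleton_mem_distinctNonSquashing one_pos,
    fun l hl => by_contra fun hne => ?_⟩⟩
  obtain ⟨⟨_, hpos⟩, _, hsum⟩ := hl
  obtain ⟨x, hx⟩ := List.exists_mem_of_ne_nil l (by rintro rfl; simp at hsum)
  have := List.lt_of_mem_of_sum_le hpos hsum.le hne hx
  have := hpos x hx
  omega

lemma b_two_mul_add_one {k : ℕ} (hk : 0 < k) : b (2 * k + 1) = b (2 * k) + 1 := by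
  rw [b_eq_ncard, b_eq_ncard, distinctNonSquashing_two_mul_add_one hk,
    Set.ncard_insert_of_notMem ?_ ((distinctNonSquashing_finite _).image _),
    Set.ncard_image_of_injective _ (List.modifyLast_injective (add_left_injective 1))]
  · rintro ⟨l, hl, heq⟩
    obtain ⟨l, p, rfl⟩ := exists_eq_concat_of_mem_distinctNonSquashing (by omega) hl
    obtain ⟨-, hlt, -, -, -⟩ := concat_mem_distinctNonSquashing.1 hl
    rw [List.modifyLast_concat, show [k, k + 1] = [k] ++ [k + 1] from rfl] at heq
    obtain ⟨rfl, hp⟩ := List.append_inj' heq rfl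
    simp at hp
    simpa [hp] using hlt k

lemma b_two_mul_add_two (k : ℕ) : b (2 * k + 2) + 1 = b (2 * k + 1) + b (k + 1) := by
  rw [b_eq_ncard, b_eq_ncard, b_eq_ncard, distinctNonSquashing_two_mul_add_two,
    Set.ncard_union_eq (disjoint_modifyLast_image_concat_image k)
      ((distinctNonSquashing_finite _).image _) ((distinctNonSquashing_finite _).sdiff.image _),
    Set.ncard_image_of_injective _ (List.modifyLast_injective (add_left_injective 1)),
    Set.ncard_image_of_injective _ (List.append_left_injective _), add_assoc,
    Set.ncard_sdiff_singleton_add_one (singleton_mem_distinctNonSquashing k.succ_pos)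
      (distinctNonSquashing_finite _)]

noncomputable def bSum (k : ℕ) : ℕ := ∑ j ∈ Finset.range (k + 1), b j

lemma bSum_succ (k : ℕ) : bSum (k + 1) = bSum k + b (k + 1) := Finset.sum_range_succ _ _

lemma bSum_one : bSum 1 = 2 := by
  simp [bSum, Finset.sum_range_succ, b_zero, b_one]

lemma b_two_mul_add_one_eq_bSum {k : ℕ} (hk : 0 < k) : b (2 * k) + 1 = bSum k := by
  induction k, hk using Nat.le_induction with
  | base => simpa [b_one, bSum_one] using b_two_mul_add_two 0
  | succ k hk ih =>
    rw [bSum_succ, ← ih, ← b_two_mul_add_one hk]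
    exact b_two_mul_add_two k

lemma bSum_two_mul_add_one_mod_two (k : ℕ) : bSum (2 * k + 1) % 2 = k % 2 := by
  induction k with
  | zero => simp [bSum_one]
  | succ k ih =>
    have h := b_two_mul_add_one (k := k + 1) k.succ_pos
    have hs : bSum (2 * (k + 1) + 1) =
        bSum (2 * k + 1) + b (2 * (k + 1)) + b (2 * (k + 1) + 1) := by
      rw [bSum_succ, show 2 * (k + 1) = 2 * k + 1 + 1 by ring, bSum_succ]
    omega

lemma bSum_two_mul_mod_two {k : ℕ} (hk : 0 < k) : bSum (2 * k) % 2 = (k + bSum k) % 2 := by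
  have h := bSum_succ (2 * k)
  rw [b_two_mul_add_one hk, b_two_mul_add_one_eq_bSum hk] at h
  have := bSum_two_mul_add_one_mod_two k
  omega

lemma b_eight_mul_mod_two {j : ℕ} (hj : 0 < j) : b (8 * j) % 2 = (j + bSum j + 1) % 2 := by
  have h8 : b (8 * j) + 1 = bSum (4 * j) := by
    rw [show 8 * j = 2 * (4 * j) by ring]
    exact b_two_mul_add_one_eq_bSum (by omega)
  have h4 : bSum (4 * j) % 2 = (2 * j + bSum (2 * j)) % 2 := by
    rw [show 4 * j = 2 * (2 * j) by ring]
    exact bSum_two_mul_mod_two (by omega)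
  have h2 := bSum_two_mul_mod_two hj
  omega

theorem stmt_10 (m : ℕ) (hm : 0 < m) :
    b (16 * m) % 2 = b (8 * m) % 2 ∧
    Even (b (32 * m + 8)) ∧ Odd (b (32 * m + 24)) := by
  refine ⟨?_, Nat.even_iff.2 ?_, Nat.odd_iff.2 ?_⟩
  · have := bSum_two_mul_mod_two hm
    rw [show 16 * m = 8 * (2 * m) by ring, b_eight_mul_mod_two (by omega), b_eight_mul_mod_two hm]
    omega
  · have := bSum_two_mul_add_one_mod_two (2 * m)
    rw [show 32 * m + 8 = 8 * (2 * (2 * m) + 1) by ring, b_eight_mul_mod_two (by omega)]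
    omega
  · have := bSum_two_mul_add_one_mod_two (2 * m + 1)
    rw [show 32 * m + 24 = 8 * (2 * (2 * m + 1) + 1) by ring, b_eight_mul_mod_two (by omega)]
    omega
end

section
/- For k ≥ 1, the number of non-squashing partitions of n into exactly k parts equals the number of partitions of n - 2^{k-1} into powers of 2 not exceeding 2^{k-1} (and is 0 if n < 2^{k-1}). -/
/-- Number of non-squashing partitions of n into exactly k parts. -/
noncomputable def a (n k : ℕ) : ℕ :=
  {l : List ℕ | IsPartList l ∧ NSq 2 l ∧ l.sum = n ∧ l.length = k}.ncard

open List

def nonSquashing (k : ℕ) : Set (List ℕ) :=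
  {l | IsPartList l ∧ NSq 2 l ∧ l.length = k}

def binaryParts (K : ℕ) : Set (List ℕ) :=
  {l | IsPartList l ∧ ∀ p ∈ l, ∃ i, p = 2 ^ i ∧ p ≤ 2 ^ K}

theorem nSq_append_singleton (s : ℕ) (l : List ℕ) (p : ℕ) :
    NSq s (l ++ [p]) ↔ NSq s l ∧ (s - 1) * l.sum ≤ p := by
  have last : (s - 1) * ((l ++ [p]).take l.length).sum ≤ (l ++ [p]).getD l.length 0 ↔
      (s - 1) * l.sum ≤ p := by
    rw [take_append_of_le_length le_rfl, take_length, getD_append_right _ _ _ _ le_rfl,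
      Nat.sub_self]
    rfl
  have init : ∀ j < l.length, ((l ++ [p]).take j).sum = (l.take j).sum ∧
      (l ++ [p]).getD j 0 = l.getD j 0 := fun j hj =>
    ⟨by rw [take_append_of_le_length hj.le], getD_append _ _ _ _ hj⟩
  simp only [NSq, length_append, length_singleton]
  constructor
  · intro h
    refine ⟨fun j hj hjl => ?_, ?_⟩
    · rw [← (init j hjl).1, ← (init j hjl).2]
      exact h j hj (by omega)
    · rcases l.eq_nil_or_concat' with rfl | ⟨l', q, rfl⟩
      · simp
      · exact last.1 (h _ (by simp) (by omega))
  · rintro ⟨h, hp⟩ j hj hjl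
    rcases Nat.lt_succ_iff_lt_or_eq.1 hjl with hjl | rfl
    · rw [(init j hjl).1, (init j hjl).2]
      exact h j hj hjl
    · exact last.2 hp

theorem isPartList_append_singleton (l : List ℕ) (p : ℕ) :
    IsPartList (l ++ [p]) ↔ IsPartList l ∧ (∀ x ∈ l, x ≤ p) ∧ 0 < p := by
  simp only [IsPartList, pairwise_append, pairwise_singleton, mem_singleton, forall_eq,
    mem_append, or_imp, forall_and, true_and]
  tauto

theorem mem_nonSquashing_one {l : List ℕ} : l ∈ nonSquashing 1 ↔ ∃ p, 0 < p ∧ l = [p] := by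
  constructor
  · rintro ⟨⟨-, hpos⟩, -, hlen⟩
    obtain ⟨p, rfl⟩ := length_eq_one_iff.1 hlen
    exact ⟨p, hpos p (mem_singleton_self p), rfl⟩
  · rintro ⟨p, hp, rfl⟩
    exact ⟨⟨pairwise_singleton _ _, by simpa using hp⟩, fun j hj hjl => by simp at hjl; omega, rfl⟩

theorem ne_nil_of_mem_nonSquashing {k : ℕ} {l : List ℕ} (hl : l ∈ nonSquashing (k + 1)) :
    l ≠ [] :=
  ne_nil_of_length_eq_add_one hl.2.2

theorem mem_nonSquashing_succ_succ {k : ℕ} {l : List ℕ} :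
    l ∈ nonSquashing (k + 2) ↔ ∃ l' p, l' ∈ nonSquashing (k + 1) ∧ l'.sum ≤ p ∧ l = l' ++ [p] := by
  constructor
  · rintro ⟨hpart, hnsq, hlen⟩
    obtain ⟨l', p, rfl⟩ := (l.eq_nil_or_concat').resolve_left (ne_nil_of_length_eq_add_one hlen)
    obtain ⟨hpart', -, -⟩ := (isPartList_append_singleton l' p).1 hpart
    obtain ⟨hnsq', hp⟩ := (nSq_append_singleton 2 l' p).1 hnsq
    exact ⟨l', p, ⟨hpart', hnsq', by simpa using hlen⟩, by simpa using hp, rfl⟩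
  · rintro ⟨l', p, hl', hp, rfl⟩
    obtain ⟨⟨hsorted, hpos⟩, hnsq, hlen⟩ := hl'
    obtain ⟨x, hx⟩ := exists_mem_of_ne_nil l' (ne_nil_of_length_eq_add_one hlen)
    have hle : ∀ y ∈ l', y ≤ p := fun y hy => (le_sum_of_mem hy).trans hp
    refine ⟨(isPartList_append_singleton l' p).2 ⟨⟨hsorted, hpos⟩, hle, ?_⟩,
      (nSq_append_singleton 2 l' p).2 ⟨hnsq, by simpa using hp⟩, by simp [hlen]⟩
    exact (hpos x hx).trans_le (hle x hx)

theorem replicate_one_mem_binaryParts (c K : ℕ) : replicate c 1 ∈ binaryParts K := by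
  refine ⟨⟨pairwise_replicate.2 (Or.inr le_rfl), fun p hp => ?_⟩, fun p hp => ?_⟩ <;>
    rw [eq_of_mem_replicate hp]
  exacts [one_pos, ⟨0, rfl, Nat.one_le_two_pow⟩]

theorem eq_replicate_of_mem_binaryParts_zero {r : List ℕ} (hr : r ∈ binaryParts 0) :
    r = replicate r.length 1 :=
  eq_replicate_iff.2 ⟨rfl, fun x hx => by
    obtain ⟨i, rfl, hi⟩ := hr.2 x hx
    exact le_antisymm hi Nat.one_le_two_pow⟩

theorem replicate_one_append_map_double_inj {c c' : ℕ} {d d' : List ℕ}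
    (h : replicate c 1 ++ d.map (2 * ·) = replicate c' 1 ++ d'.map (2 * ·)) :
    c = c' ∧ d = d' := by
  have hcount : ∀ e : List ℕ, (e.map (2 * ·)).count 1 = 0 := fun e =>
    count_eq_zero.2 fun he => by obtain ⟨y, -, hy⟩ := mem_map.1 he; omega
  obtain rfl : c = c' := by simpa [count_append, hcount] using congrArg (count 1) h
  exact ⟨rfl, map_injective_iff.2 (fun x y hxy => by simpa using hxy) (append_cancel_left h)⟩

theorem replicate_one_append_map_double_mem_binaryParts {K : ℕ} (c : ℕ) {d : List ℕ}
    (hd : d ∈ binaryParts K) : replicate c 1 ++ d.map (2 * ·) ∈ binaryParts (K + 1) := by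
  obtain ⟨⟨hsorted, hpos⟩, hpow⟩ := hd
  refine ⟨⟨pairwise_append.2 ⟨pairwise_replicate.2 (Or.inr le_rfl),
    hsorted.map _ fun x y hxy => by omega, ?_⟩, ?_⟩, ?_⟩
  · intro x hx y hy
    obtain ⟨z, hz, rfl⟩ := mem_map.1 hy
    have := hpos z hz
    rw [eq_of_mem_replicate hx]; omega
  · simp only [mem_append, mem_map]
    rintro x (hx | ⟨z, hz, rfl⟩)
    · rw [eq_of_mem_replicate hx]; exact one_pos
    · have := hpos z hz; omega
  · simp only [mem_append, mem_map]
    rintro x (hx | ⟨z, hz, rfl⟩)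
    · rw [eq_of_mem_replicate hx]; exact ⟨0, rfl, Nat.one_le_two_pow⟩
    · obtain ⟨i, rfl, hi⟩ := hpow z hz
      exact ⟨i + 1, by ring, by rw [pow_succ']; omega⟩

theorem exists_eq_replicate_one_append_map_double {K : ℕ} {r : List ℕ}
    (hr : r ∈ binaryParts (K + 1)) :
    ∃ c d, d ∈ binaryParts K ∧ r = replicate c 1 ++ d.map (2 * ·) := by
  obtain ⟨⟨hsorted, hpos⟩, hpow⟩ := hr
  have heven : ∀ x ∈ r.filter (· ≠ 1), ∃ i ≤ K, x = 2 * 2 ^ i := by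
    intro x hx
    obtain ⟨hxr, hx1⟩ := mem_filter.1 hx
    obtain ⟨_ | i, rfl, hi⟩ := hpow x hxr
    · simp at hx1
    · exact ⟨i, by simpa using (Nat.pow_le_pow_iff_right one_lt_two).1 hi, pow_succ' 2 i⟩
  set d := (r.filter (· ≠ 1)).map (· / 2)
  have hdouble : d.map (2 * ·) = r.filter (· ≠ 1) := by
    rw [map_map]
    conv_rhs => rw [← map_id (r.filter _)]
    refine map_congr_left fun x hx => ?_
    obtain ⟨i, -, rfl⟩ := heven x hx
    simp
  have hhalf : ∀ y ∈ d, ∃ i ≤ K, y = 2 ^ i := by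
    simp only [d, mem_map]
    rintro _ ⟨x, hx, rfl⟩
    obtain ⟨i, hi, rfl⟩ := heven x hx
    exact ⟨i, hi, Nat.mul_div_cancel_left _ two_pos⟩
  have hd : d ∈ binaryParts K := by
    refine ⟨⟨(hsorted.sublist filter_sublist).map _ fun x y => Nat.div_le_div_right,
      fun y hy => ?_⟩, fun y hy => ?_⟩ <;> obtain ⟨i, hi, rfl⟩ := hhalf y hy
    exacts [Nat.two_pow_pos i, ⟨i, rfl, Nat.pow_le_pow_right two_pos hi⟩]
  refine ⟨r.count 1, d, hd, ?_⟩
  have hperm := filter_append_perm (· = 1) r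
  rw [filter_eq, show (fun x : ℕ => !decide (x = 1)) = (· ≠ 1) by funext x; simp, ← hdouble]
    at hperm
  exact hperm.symm.eq_of_pairwise (fun x y _ _ => Nat.le_antisymm) hsorted
    (replicate_one_append_map_double_mem_binaryParts _ hd).1.1

/-- Works on the reversed list, largest part first. -/
def toBinaryRev : List ℕ → List ℕ
  | [] => []
  | [p] => replicate (p - 1) 1
  | p :: q :: r => replicate (p - (q :: r).sum) 1 ++ (toBinaryRev (q :: r)).map (2 * ·)

def toBinary (l : List ℕ) : List ℕ :=
  toBinaryRev l.reverse

theorem toBinary_singleton (p : ℕ) : toBinary [p] = replicate (p - 1) 1 :=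
  rfl

theorem toBinary_append_singleton {l : List ℕ} (hl : l ≠ []) (p : ℕ) :
    toBinary (l ++ [p]) = replicate (p - l.sum) 1 ++ (toBinary l).map (2 * ·) := by
  obtain ⟨q, r, hqr⟩ := exists_cons_of_ne_nil (reverse_ne_nil_iff.2 hl)
  rw [toBinary, toBinary, reverse_append, reverse_singleton, singleton_append, hqr, toBinaryRev,
    ← hqr, sum_reverse]

theorem sum_toBinary_add_two_pow {K : ℕ} {l : List ℕ} (hl : l ∈ nonSquashing (K + 1)) :
    (toBinary l).sum + 2 ^ K = l.sum := by
  induction K generalizing l with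
  | zero =>
    obtain ⟨p, hp, rfl⟩ := mem_nonSquashing_one.1 hl
    simp only [toBinary_singleton, sum_replicate, smul_eq_mul, sum_singleton]
    omega
  | succ K ih =>
    obtain ⟨l', p, hl', hp, rfl⟩ := mem_nonSquashing_succ_succ.1 hl
    have hsum := ih hl'
    rw [toBinary_append_singleton (ne_nil_of_mem_nonSquashing hl'), sum_append, sum_append,
      sum_replicate, sum_map_mul_left, map_id', pow_succ]
    simp only [smul_eq_mul, mul_one, sum_singleton]
    omega

theorem toBinary_mem_binaryParts {K : ℕ} {l : List ℕ} (hl : l ∈ nonSquashing (K + 1)) :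
    toBinary l ∈ binaryParts K := by
  induction K generalizing l with
  | zero =>
    obtain ⟨p, -, rfl⟩ := mem_nonSquashing_one.1 hl
    exact replicate_one_mem_binaryParts _ _
  | succ K ih =>
    obtain ⟨l', p, hl', -, rfl⟩ := mem_nonSquashing_succ_succ.1 hl
    rw [toBinary_append_singleton (ne_nil_of_mem_nonSquashing hl')]
    exact replicate_one_append_map_double_mem_binaryParts _ (ih hl')

theorem injOn_toBinary (K : ℕ) : Set.InjOn toBinary (nonSquashing (K + 1)) := by
  induction K with
  | zero =>
    intro l₁ hl₁ l₂ hl₂ h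
    obtain ⟨p₁, hp₁, rfl⟩ := mem_nonSquashing_one.1 hl₁
    obtain ⟨p₂, hp₂, rfl⟩ := mem_nonSquashing_one.1 hl₂
    have := congrArg length h
    simp only [toBinary_singleton, length_replicate] at this
    rw [show p₁ = p₂ by omega]
  | succ K ih =>
    intro l₁ hl₁ l₂ hl₂ h
    obtain ⟨l₁', p₁, hl₁', hp₁, rfl⟩ := mem_nonSquashing_succ_succ.1 hl₁
    obtain ⟨l₂', p₂, hl₂', hp₂, rfl⟩ := mem_nonSquashing_succ_succ.1 hl₂
    rw [toBinary_append_singleton (ne_nil_of_mem_nonSquashing hl₁'),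
      toBinary_append_singleton (ne_nil_of_mem_nonSquashing hl₂')] at h
    obtain ⟨hdiff, hinit⟩ := replicate_one_append_map_double_inj h
    obtain rfl := ih hl₁' hl₂' hinit
    rw [show p₁ = p₂ by omega]

theorem surjOn_toBinary (K : ℕ) : Set.SurjOn toBinary (nonSquashing (K + 1)) (binaryParts K) := by
  induction K with
  | zero =>
    intro r hr
    refine ⟨[r.length + 1], mem_nonSquashing_one.2 ⟨_, Nat.succ_pos _, rfl⟩, ?_⟩
    rw [toBinary_singleton, Nat.add_sub_cancel, ← eq_replicate_of_mem_binaryParts_zero hr]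
  | succ K ih =>
    intro r hr
    obtain ⟨c, d, hd, rfl⟩ := exists_eq_replicate_one_append_map_double hr
    obtain ⟨l, hl, rfl⟩ := ih hd
    refine ⟨l ++ [l.sum + c], mem_nonSquashing_succ_succ.2 ⟨l, _, hl, Nat.le_add_right _ _, rfl⟩,
      ?_⟩
    rw [toBinary_append_singleton (ne_nil_of_mem_nonSquashing hl), Nat.add_sub_cancel_left]

theorem image_toBinary_sum_eq (K n : ℕ) :
    toBinary '' {l ∈ nonSquashing (K + 1) | l.sum = n} =
      {r ∈ binaryParts K | r.sum + 2 ^ K = n} := by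
  apply Set.Subset.antisymm
  · rintro _ ⟨l, ⟨hl, rfl⟩, rfl⟩
    exact ⟨toBinary_mem_binaryParts hl, sum_toBinary_add_two_pow hl⟩
  · rintro r ⟨hr, rfl⟩
    obtain ⟨l, hl, rfl⟩ := surjOn_toBinary K hr
    exact ⟨l, ⟨hl, (sum_toBinary_add_two_pow hl).symm⟩, rfl⟩

theorem a_eq_ncard (n k : ℕ) : a n k = {l ∈ nonSquashing k | l.sum = n}.ncard := by
  unfold a nonSquashing
  congr 1
  ext l
  simp only [Set.mem_ofPred_eq]
  tauto

theorem stmt_13 (n k : ℕ) (hk : 1 ≤ k) :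
    (n < 2 ^ (k - 1) → a n k = 0) ∧
    (2 ^ (k - 1) ≤ n →
      a n k = {l : List ℕ | IsPartList l ∧ (∀ p ∈ l, ∃ i, p = 2 ^ i ∧ p ≤ 2 ^ (k - 1)) ∧
        l.sum = n - 2 ^ (k - 1)}.ncard) := by
  obtain ⟨K, rfl⟩ : ∃ K, k = K + 1 := ⟨k - 1, by omega⟩
  have hcount : a n (K + 1) = {r ∈ binaryParts K | r.sum + 2 ^ K = n}.ncard := by
    rw [a_eq_ncard, ← image_toBinary_sum_eq,
      ((injOn_toBinary K).mono (Set.sep_subset _ _)).ncard_image]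
  rw [Nat.add_sub_cancel, hcount]
  refine ⟨fun hn => ?_, fun hn => ?_⟩
  · convert Set.ncard_empty (List ℕ)
    exact Set.eq_empty_of_forall_notMem fun r hr => by have := hr.2; omega
  · congr 1
    ext r
    simp only [binaryParts, Set.mem_ofPred_eq, and_assoc]
    exact and_congr_right fun _ => and_congr_right fun _ => by omega
end
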